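/- Let T = [[a,b],[c,d]] be a J-unitary operator on K and let φ ∈ K satisfy Tφ = φ. Then ⟨φ, [[−(a*)^{-1}, 0],[0, d^{-1}]] φ⟩ = −⟨φ, Jφ⟩, where [[−(a*)^{-1}, 0],[0, d^{-1}]] denotes the block-diagonal operator on K = H ⊕ H with entries −(a*)^{-1} and d^{-1}. -/

import Mathlib

noncomputable section

open ContinuousLinearMap

variable {H : Type*} [NormedAddCommGroup H] [InnerProductSpace ℂ H] [CompleteSpace H]
  [TopologicalSpace.SeparableSpace H]

local notation "K" => WithLp 2 (H × H)

/-- The 2×2 block operator `[[a,b],[c,d]]` on `K = H ⊕ H`. -/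
def blk (a b c d : H →L[ℂ] H) : K →L[ℂ] K :=
  (((WithLp.prodContinuousLinearEquiv 2 ℂ H H).symm : (H × H) →L[ℂ] K).comp
      ((((a.comp (fst ℂ H H)) + (b.comp (snd ℂ H H))).prod
        ((c.comp (fst ℂ H H)) + (d.comp (snd ℂ H H)))))).comp
    ((WithLp.prodContinuousLinearEquiv 2 ℂ H H : K →L[ℂ] (H × H)))

/-- The fundamental symmetry `J = [[1,0],[0,-1]]`. -/
def fundJ : K →L[ℂ] K := blk 1 0 0 (-1)

/-- A bounded operator `T` on the Krein space `(K, J)` is `J`-unitary if it is invertible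
and `T* J T = J`. -/
def IsJUnitary (T : K →L[ℂ] K) : Prop :=
  IsUnit T ∧ star T * fundJ * T = fundJ

/-!
Split the block-diagonal operator as `M + N` with `M = [[-(a*)⁻¹, 0], [0, 0]]` and
`N = [[0, 0], [0, d⁻¹]]`. For a fixed vector `⟪φ, Mφ⟫ = ⟪Tφ, Mφ⟫` and `⟪φ, Nφ⟫ = ⟪φ, NTφ⟫`,
so the form equals `⟪φ, (T* M + N T) φ⟫`, and `T* M + N T = -J`: its diagonal blocks are
`-(a*)(a*)⁻¹` and `d⁻¹ d`, and its off-diagonal block `d⁻¹ c - b* (a*)⁻¹` vanishes because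
`T J T* = J` (equivalent to `T* J T = J` for invertible `T`, as `J² = 1`) gives `c a* = d b*`.
The inverses exist since `a* a = 1 + c* c ≥ 1` and `a a* = 1 + b b* ≥ 1` in the C⋆-algebra of
bounded operators, and similarly for `d`.
-/

theorem isUnit_of_isUnit_mul_of_isUnit_mul {M : Type*} [Monoid M] {x y z : M}
    (hr : IsUnit (x * z)) (hl : IsUnit (y * x)) : IsUnit x := by
  obtain ⟨r, hr⟩ := hr.exists_right_inv
  obtain ⟨l, hl⟩ := hl.exists_left_inv
  exact isUnit_iff_exists_and_exists.mpr
    ⟨⟨z * r, by rw [← mul_assoc, hr]⟩, ⟨l * y, by rw [mul_assoc, hl]⟩⟩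

theorem mul_mul_eq_of_mul_mul_eq {M : Type*} [Monoid M] {J T S : M} (hJ : J * J = 1)
    (hT : IsUnit T) (h : S * J * T = J) : T * J * S = J := by
  obtain ⟨u, rfl⟩ := hT
  have hinv : J * S * J = ↑u⁻¹ :=
    Units.eq_inv_of_mul_eq_one_right (by simp only [mul_assoc] at h ⊢; rw [h, hJ])
  calc ↑u * J * S = ↑u * (J * S * J) * J := by simp only [mul_assoc, hJ, mul_one]
    _ = J := by rw [hinv, Units.mul_inv, one_mul]

theorem CStarAlgebra.isUnit_of_one_le_star_mul_self {A : Type*} [CStarAlgebra A] [PartialOrder A]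
    [StarOrderedRing A] {x : A} (h₁ : 1 ≤ x * star x) (h₂ : 1 ≤ star x * x) : IsUnit x :=
  isUnit_of_isUnit_mul_of_isUnit_mul (isUnit_of_le 1 h₁) (isUnit_of_le 1 h₂)

theorem inner_add_apply_self_of_apply_eq_self {𝕜 E : Type*} [RCLike 𝕜] [NormedAddCommGroup E]
    [InnerProductSpace 𝕜 E] [CompleteSpace E] {T M N S : E →L[𝕜] E}
    (h : star T * M + N * T = S) {φ : E} (hφ : T φ = φ) :
    inner 𝕜 φ ((M + N) φ) = inner 𝕜 φ (S φ) := by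
  calc inner 𝕜 φ ((M + N) φ) = inner 𝕜 (T φ) (M φ) + inner 𝕜 φ (N (T φ)) := by
        rw [hφ, add_apply, inner_add_right]
    _ = inner 𝕜 φ ((star T * M + N * T) φ) := by
        rw [add_apply, inner_add_right, mul_apply_eq_comp, mul_apply_eq_comp, star_eq_adjoint,
          adjoint_inner_right]
    _ = inner 𝕜 φ (S φ) := by rw [h]

section BlockOperators

variable {E : Type*} [NormedAddCommGroup E] [InnerProductSpace ℂ E]

theorem blk_fst (a b c d : E →L[ℂ] E) (x : WithLp 2 (E × E)) :
    (blk a b c d x).fst = a x.fst + b x.snd := rfl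

theorem blk_snd (a b c d : E →L[ℂ] E) (x : WithLp 2 (E × E)) :
    (blk a b c d x).snd = c x.fst + d x.snd := rfl

theorem WithLp.prod_continuousLinearMap_ext {S T : WithLp 2 (E × E) →L[ℂ] WithLp 2 (E × E)}
    (h₁ : ∀ x, (S x).fst = (T x).fst) (h₂ : ∀ x, (S x).snd = (T x).snd) : S = T :=
  ContinuousLinearMap.ext fun x => WithLp.ofLp_injective 2 (Prod.ext (h₁ x) (h₂ x))

theorem blk_one : blk (1 : E →L[ℂ] E) 0 0 1 = 1 :=
  WithLp.prod_continuousLinearMap_ext (fun x => by simp [blk_fst]) (fun x => by simp [blk_snd])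

theorem blk_add (a b c d a' b' c' d' : E →L[ℂ] E) :
    blk a b c d + blk a' b' c' d' = blk (a + a') (b + b') (c + c') (d + d') :=
  WithLp.prod_continuousLinearMap_ext
    (fun x => by simp only [add_apply, WithLp.add_fst, blk_fst]; abel)
    (fun x => by simp only [add_apply, WithLp.add_snd, blk_snd]; abel)

theorem neg_blk (a b c d : E →L[ℂ] E) : -blk a b c d = blk (-a) (-b) (-c) (-d) :=
  WithLp.prod_continuousLinearMap_ext
    (fun x => by simp only [neg_apply, WithLp.neg_fst, blk_fst]; abel)
    (fun x => by simp only [neg_apply, WithLp.neg_snd, blk_snd]; abel)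

theorem blk_mul (a b c d a' b' c' d' : E →L[ℂ] E) :
    blk a b c d * blk a' b' c' d' =
      blk (a * a' + b * c') (a * b' + b * d') (c * a' + d * c') (c * b' + d * d') :=
  WithLp.prod_continuousLinearMap_ext
    (fun x => by simp only [mul_apply_eq_comp, add_apply, blk_fst, blk_snd, map_add]; abel)
    (fun x => by simp only [mul_apply_eq_comp, add_apply, blk_fst, blk_snd, map_add]; abel)

theorem blk_inj {a b c d a' b' c' d' : E →L[ℂ] E} :
    blk a b c d = blk a' b' c' d' ↔ a = a' ∧ b = b' ∧ c = c' ∧ d = d' := by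
  refine ⟨fun h => ⟨?_, ?_, ?_, ?_⟩, fun ⟨ha, hb, hc, hd⟩ => ha ▸ hb ▸ hc ▸ hd ▸ rfl⟩ <;>
    ext v
  · simpa [blk_fst] using congrArg (fun T => (T (WithLp.toLp 2 (v, 0))).fst) h
  · simpa [blk_fst] using congrArg (fun T => (T (WithLp.toLp 2 (0, v))).fst) h
  · simpa [blk_snd] using congrArg (fun T => (T (WithLp.toLp 2 (v, 0))).snd) h
  · simpa [blk_snd] using congrArg (fun T => (T (WithLp.toLp 2 (0, v))).snd) h

theorem fundJ_mul_fundJ : (fundJ : WithLp 2 (E × E) →L[ℂ] WithLp 2 (E × E)) * fundJ = 1 := by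
  rw [fundJ, blk_mul, ← blk_one]
  simp

variable [CompleteSpace E]

theorem star_blk (a b c d : E →L[ℂ] E) :
    star (blk a b c d) = blk (star a) (star c) (star b) (star d) := by
  rw [star_eq_adjoint, eq_comm, eq_adjoint_iff]
  intro x y
  simp only [WithLp.prod_inner_apply, WithLp.ofLp_fst, WithLp.ofLp_snd, blk_fst, blk_snd,
    star_eq_adjoint, inner_add_left, inner_add_right, adjoint_inner_left]
  ring

theorem star_blk_mul_fundJ_mul_blk (a b c d : E →L[ℂ] E) :
    star (blk a b c d) * fundJ * blk a b c d =
      blk (star a * a - star c * c) (star a * b - star c * d)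
        (star b * a - star d * c) (star b * b - star d * d) := by
  rw [fundJ, star_blk, blk_mul, blk_mul]
  simp only [mul_one, mul_zero, zero_add, add_zero, mul_neg, neg_mul, sub_eq_add_neg]

theorem blk_mul_fundJ_mul_star_blk (a b c d : E →L[ℂ] E) :
    blk a b c d * fundJ * star (blk a b c d) =
      blk (a * star a - b * star b) (a * star c - b * star d)
        (c * star a - d * star b) (c * star c - d * star d) := by
  rw [fundJ, star_blk, blk_mul, blk_mul]
  simp only [mul_one, mul_zero, zero_add, add_zero, mul_neg, neg_mul, sub_eq_add_neg]

end BlockOperators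

section JUnitary

variable {E : Type*} [NormedAddCommGroup E] [InnerProductSpace ℂ E] [CompleteSpace E]

theorem IsJUnitary.mul_fundJ_mul_star {T : WithLp 2 (E × E) →L[ℂ] WithLp 2 (E × E)}
    (hT : IsJUnitary T) : T * fundJ * star T = fundJ :=
  mul_mul_eq_of_mul_mul_eq fundJ_mul_fundJ hT.1 hT.2

variable {a b c d : E →L[ℂ] E}

theorem IsJUnitary.star_mul_blocks (hT : IsJUnitary (blk a b c d)) :
    star a * a - star c * c = 1 ∧ star a * b - star c * d = 0 ∧
      star b * a - star d * c = 0 ∧ star b * b - star d * d = -1 :=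
  blk_inj.mp ((star_blk_mul_fundJ_mul_blk a b c d).symm.trans hT.2)

theorem IsJUnitary.mul_star_blocks (hT : IsJUnitary (blk a b c d)) :
    a * star a - b * star b = 1 ∧ a * star c - b * star d = 0 ∧
      c * star a - d * star b = 0 ∧ c * star c - d * star d = -1 :=
  blk_inj.mp ((blk_mul_fundJ_mul_star_blk a b c d).symm.trans hT.mul_fundJ_mul_star)

theorem IsJUnitary.isUnit_a (hT : IsJUnitary (blk a b c d)) : IsUnit a := by
  obtain ⟨h₁, -, -, -⟩ := hT.mul_star_blocks
  obtain ⟨h₂, -, -, -⟩ := hT.star_mul_blocks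
  refine CStarAlgebra.isUnit_of_one_le_star_mul_self ?_ ?_
  · rw [sub_eq_iff_eq_add.mp h₁]
    exact le_add_of_nonneg_right (mul_star_self_nonneg b)
  · rw [sub_eq_iff_eq_add.mp h₂]
    exact le_add_of_nonneg_right (star_mul_self_nonneg c)

theorem IsJUnitary.isUnit_d (hT : IsJUnitary (blk a b c d)) : IsUnit d := by
  obtain ⟨-, -, -, h₁⟩ := hT.mul_star_blocks
  obtain ⟨-, -, -, h₂⟩ := hT.star_mul_blocks
  rw [← neg_sub, neg_inj] at h₁ h₂
  refine CStarAlgebra.isUnit_of_one_le_star_mul_self ?_ ?_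
  · rw [sub_eq_iff_eq_add.mp h₁]
    exact le_add_of_nonneg_right (mul_star_self_nonneg c)
  · rw [sub_eq_iff_eq_add.mp h₂]
    exact le_add_of_nonneg_right (star_mul_self_nonneg b)

theorem IsJUnitary.inverse_d_mul_c (hT : IsJUnitary (blk a b c d)) :
    Ring.inverse d * c = star b * Ring.inverse (star a) := by
  obtain ⟨-, -, h, -⟩ := hT.mul_star_blocks
  rw [Ring.inverse_mul_eq_iff_eq_mul _ _ _ hT.isUnit_d, ← mul_assoc,
    Ring.eq_mul_inverse_iff_mul_eq _ _ _ hT.isUnit_a.star]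
  exact sub_eq_zero.mp h

theorem IsJUnitary.star_mul_add_mul_eq_neg_fundJ (hT : IsJUnitary (blk a b c d)) :
    star (blk a b c d) * blk (-Ring.inverse (star a)) 0 0 0 +
      blk 0 0 0 (Ring.inverse d) * blk a b c d = -fundJ := by
  rw [star_blk, blk_mul, blk_mul, blk_add, fundJ, neg_blk]
  simp only [mul_neg, mul_zero, zero_mul, add_zero, zero_add, neg_zero,
    Ring.mul_inverse_cancel _ hT.isUnit_a.star, Ring.inverse_mul_cancel _ hT.isUnit_d,
    hT.inverse_d_mul_c, neg_add_cancel, neg_neg]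

end JUnitary

/-- from the proof of Proposition 5.12 of the paper: for a `J`-unitary
`T = [[a,b],[c,d]]` and a fixed vector `Tφ = φ`, the quadratic form of the block-diagonal
operator `[[−(a*)⁻¹, 0],[0, d⁻¹]]` at `φ` equals `−⟪φ, Jφ⟫`. -/
theorem phase_speed_eq_neg_J_form (a b c d : H →L[ℂ] H)
    (hT : IsJUnitary (blk a b c d)) (φ : K) (hφ : (blk a b c d) φ = φ) :
    (inner ℂ φ ((blk (-(Ring.inverse (star a))) 0 0 (Ring.inverse d)) φ) : ℂ)
      = -(inner ℂ φ ((fundJ : K →L[ℂ] K) φ) : ℂ) := by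
  have hsplit : blk (-Ring.inverse (star a)) 0 0 (Ring.inverse d) =
      blk (-Ring.inverse (star a)) 0 0 0 + blk 0 0 0 (Ring.inverse d) := by
    rw [blk_add]; simp only [add_zero, zero_add]
  rw [hsplit, inner_add_apply_self_of_apply_eq_self hT.star_mul_add_mul_eq_neg_fundJ hφ,
    neg_apply, inner_neg_right]
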